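/- arXiv:1101.4451 — 5 statements merged into one kernel-verified Lean document; each statement's English description precedes it below -/
import Mathlib

section
/- Let n ≥ 3, k a field of characteristic zero, Χ and V vector spaces over k. If a multilinear map L : Χ^n → V lies in F_L (i.e. L satisfies (l1) and, when n ≥ 4, also (l2), (l3), (l4)), then the pair (Φ_R(L), Φ_T(L)) lies in F_{(R,T)}: Φ_R(L) satisfies (b1) and, when n ≥ 4, (b3) and (b4); Φ_T(L) satisfies (t1) and (t2); and the pair (Φ_R(L), Φ_T(L)) satisfies (aa). -/
/- Common setup: indices of the last four slots (1-indexed slots `n-3`, `n-2`, `n-1`, `n`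
correspond to the `Fin n` elements `p4`, `p3`, `p2`, `p1` below), and the conditions
(l1)-(l4), (b1), (b3), (b4), (t1), (t2), (aa) together with the maps `Φ_R`, `Φ_T`, `Ψ`. -/

/-- The slot `n` (1-indexed). -/
def p1 {n : ℕ} (_h : 3 ≤ n) : Fin n := ⟨n - 1, by omega⟩
/-- The slot `n-1` (1-indexed). -/
def p2 {n : ℕ} (_h : 3 ≤ n) : Fin n := ⟨n - 2, by omega⟩
/-- The slot `n-2` (1-indexed). -/
def p3 {n : ℕ} (_h : 3 ≤ n) : Fin n := ⟨n - 3, by omega⟩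
/-- The slot `n-3` (1-indexed); only meaningful when `4 ≤ n`. -/
def p4 {n : ℕ} (_h : 3 ≤ n) : Fin n := ⟨n - 4, by omega⟩

section Conditions

variable {n : ℕ} {M V : Type*} [AddCommGroup V]

/-- (l1): the sum of `L` over all six permutations of the last three slots vanishes. -/
def CondL1 (h : 3 ≤ n) (L : (Fin n → M) → V) : Prop :=
  ∀ x : Fin n → M,
    L x + L (x ∘ ⇑(Equiv.swap (p3 h) (p2 h))) + L (x ∘ ⇑(Equiv.swap (p3 h) (p1 h)))
      + L (x ∘ ⇑(Equiv.swap (p2 h) (p1 h)))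
      + L (x ∘ ⇑(Equiv.swap (p3 h) (p2 h) * Equiv.swap (p2 h) (p1 h)))
      + L (x ∘ ⇑(Equiv.swap (p2 h) (p1 h) * Equiv.swap (p3 h) (p2 h))) = 0

/-- (l2): the signed sum of `L` over all six permutations of the slots `n-3`, `n-2`, `n-1`
(1-indexed) vanishes. -/
def CondL2 (h : 3 ≤ n) (L : (Fin n → M) → V) : Prop :=
  ∀ x : Fin n → M,
    L x - L (x ∘ ⇑(Equiv.swap (p4 h) (p3 h))) - L (x ∘ ⇑(Equiv.swap (p4 h) (p2 h)))
      - L (x ∘ ⇑(Equiv.swap (p3 h) (p2 h)))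
      + L (x ∘ ⇑(Equiv.swap (p4 h) (p3 h) * Equiv.swap (p3 h) (p2 h)))
      + L (x ∘ ⇑(Equiv.swap (p3 h) (p2 h) * Equiv.swap (p4 h) (p3 h))) = 0

/-- (l3): `L` is symmetric in its first `n-3` arguments. -/
def CondL3 (h : 3 ≤ n) (L : (Fin n → M) → V) : Prop :=
  ∀ ω : Equiv.Perm (Fin n), ω (p3 h) = p3 h → ω (p2 h) = p2 h → ω (p1 h) = p1 h →
    ∀ x : Fin n → M, L (x ∘ ⇑ω) = L x

/-- (l4): the signed sum of `L` over permutations `τ` of slots `{n-3, n-2}` and `λ` of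
slots `{n-1, n}` (1-indexed) vanishes. -/
def CondL4 (h : 3 ≤ n) (L : (Fin n → M) → V) : Prop :=
  ∀ x : Fin n → M,
    L x - L (x ∘ ⇑(Equiv.swap (p4 h) (p3 h))) - L (x ∘ ⇑(Equiv.swap (p2 h) (p1 h)))
      + L (x ∘ ⇑(Equiv.swap (p4 h) (p3 h) * Equiv.swap (p2 h) (p1 h))) = 0

/-- (b1): antisymmetry of `R` in the slots `n-2`, `n-1` (1-indexed). -/
def CondB1 (h : 3 ≤ n) (R : (Fin n → M) → V) : Prop :=
  ∀ x : Fin n → M, R x + R (x ∘ ⇑(Equiv.swap (p3 h) (p2 h))) = 0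

/-- (b3): the cyclic sum of `R` over cyclic permutations of the slots `n-3`, `n-2`, `n-1`
(1-indexed) vanishes. -/
def CondB3 (h : 3 ≤ n) (R : (Fin n → M) → V) : Prop :=
  ∀ x : Fin n → M,
    R x + R (x ∘ ⇑(Equiv.swap (p4 h) (p3 h) * Equiv.swap (p3 h) (p2 h)))
      + R (x ∘ ⇑((Equiv.swap (p4 h) (p3 h) * Equiv.swap (p3 h) (p2 h))
            * (Equiv.swap (p4 h) (p3 h) * Equiv.swap (p3 h) (p2 h)))) = 0

/-- (b4): `R` is symmetric in its first `n-3` arguments. -/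
def CondB4 (h : 3 ≤ n) (R : (Fin n → M) → V) : Prop :=
  ∀ ω : Equiv.Perm (Fin n), ω (p3 h) = p3 h → ω (p2 h) = p2 h → ω (p1 h) = p1 h →
    ∀ x : Fin n → M, R (x ∘ ⇑ω) = R x

/-- (t1): antisymmetry of `T` in the last two slots. -/
def CondT1 (h : 3 ≤ n) (T : (Fin n → M) → V) : Prop :=
  ∀ x : Fin n → M, T x + T (x ∘ ⇑(Equiv.swap (p2 h) (p1 h))) = 0

/-- (t2): `T` is symmetric in its first `n-2` arguments. -/
def CondT2 (h : 3 ≤ n) (T : (Fin n → M) → V) : Prop :=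
  ∀ ω : Equiv.Perm (Fin n), ω (p2 h) = p2 h → ω (p1 h) = p1 h →
    ∀ x : Fin n → M, T (x ∘ ⇑ω) = T x

/-- (aa): the cyclic sum of `R + T` over cyclic permutations of the last three slots vanishes. -/
def CondAA (h : 3 ≤ n) (R T : (Fin n → M) → V) : Prop :=
  ∀ x : Fin n → M,
    (R x + T x)
      + (R (x ∘ ⇑(Equiv.swap (p3 h) (p2 h) * Equiv.swap (p2 h) (p1 h)))
          + T (x ∘ ⇑(Equiv.swap (p3 h) (p2 h) * Equiv.swap (p2 h) (p1 h))))
      + (R (x ∘ ⇑((Equiv.swap (p3 h) (p2 h) * Equiv.swap (p2 h) (p1 h))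
            * (Equiv.swap (p3 h) (p2 h) * Equiv.swap (p2 h) (p1 h))))
          + T (x ∘ ⇑((Equiv.swap (p3 h) (p2 h) * Equiv.swap (p2 h) (p1 h))
            * (Equiv.swap (p3 h) (p2 h) * Equiv.swap (p2 h) (p1 h))))) = 0

end Conditions

/-- `Φ_R(L)(X₁,…,Xₙ) = (1/6)[L(X₁,…,X_{n-3},X_{n-1},X_{n-2},X_n) − L(X₁,…,Xₙ)]`. -/
def PhiR (k : Type*) [Field k] {n : ℕ} {M V : Type*} [AddCommGroup V] [Module k V]
    (h : 3 ≤ n) (L : (Fin n → M) → V) : (Fin n → M) → V :=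
  fun x => (6 : k)⁻¹ • (L (x ∘ ⇑(Equiv.swap (p3 h) (p2 h))) - L x)

/-- `Φ_T(L)(X₁,…,Xₙ) = (1/6)[L(X₁,…,Xₙ) − L(X₁,…,X_{n-2},X_n,X_{n-1})]`. -/
def PhiT (k : Type*) [Field k] {n : ℕ} {M V : Type*} [AddCommGroup V] [Module k V]
    (h : 3 ≤ n) (L : (Fin n → M) → V) : (Fin n → M) → V :=
  fun x => (6 : k)⁻¹ • (L x - L (x ∘ ⇑(Equiv.swap (p2 h) (p1 h))))

/-- `Ψ(R,T)(X₁,…,Xₙ) = −3R(X₁,…,Xₙ) − R(…,X_{n-1},X_n,X_{n-2}) + R(…,X_n,X_{n-2},X_{n-1})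
+ 2T(X₁,…,Xₙ) − 2T(…,X_{n-1},X_n,X_{n-2})`. -/
def Psi {n : ℕ} {M V : Type*} [AddCommGroup V]
    (h : 3 ≤ n) (R T : (Fin n → M) → V) : (Fin n → M) → V :=
  fun x =>
    -((3 : ℤ) • R x) - R (x ∘ ⇑(Equiv.swap (p3 h) (p2 h) * Equiv.swap (p2 h) (p1 h)))
      + R (x ∘ ⇑(Equiv.swap (p3 h) (p2 h) * Equiv.swap (p2 h) (p1 h))⁻¹)
      + (2 : ℤ) • T x
      - (2 : ℤ) • T (x ∘ ⇑(Equiv.swap (p3 h) (p2 h) * Equiv.swap (p2 h) (p1 h)))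


section Aux

variable {n : ℕ} {M V : Type*} [AddCommGroup V]

lemma comp_mul (x : Fin n → M) (σ τ : Equiv.Perm (Fin n)) :
    (x ∘ ⇑σ) ∘ ⇑τ = x ∘ ⇑(σ * τ) := rfl

lemma swap_sandwich {α : Type*} [DecidableEq α] (i j a b : α) :
    Equiv.swap i j * Equiv.swap a b * Equiv.swap i j =
      Equiv.swap (Equiv.swap i j a) (Equiv.swap i j b) := by
  conv_rhs => rw [Equiv.swap_apply_apply]
  rw [Equiv.swap_inv]

lemma q_mul {L : (Fin n → M) → V} {t α β : Equiv.Perm (Fin n)}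
    (hA : ∀ y, L (y ∘ ⇑α) - L (y ∘ ⇑(α * t)) = L y - L (y ∘ ⇑t))
    (hB : ∀ y, L (y ∘ ⇑β) - L (y ∘ ⇑(β * t)) = L y - L (y ∘ ⇑t)) :
    ∀ y, L (y ∘ ⇑(α * β)) - L (y ∘ ⇑(α * β * t)) = L y - L (y ∘ ⇑t) := by
  intro y
  have h1 := hB (y ∘ ⇑α)
  simp only [comp_mul] at h1
  rw [mul_assoc, h1]
  exact hA y

end Aux

/-- if a multilinear map `L` lies in `F_L`, then `(Φ_R(L), Φ_T(L))` lies in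
`F_{(R,T)}`. -/
theorem statement0 {k : Type*} [Field k] [CharZero k] {M V : Type*}
    [AddCommGroup M] [Module k M] [AddCommGroup V] [Module k V]
    {n : ℕ} (hn : 3 ≤ n)
    (L : MultilinearMap k (fun _ : Fin n => M) V)
    (hl1 : CondL1 hn ⇑L)
    (hl2 : 4 ≤ n → CondL2 hn ⇑L)
    (hl3 : 4 ≤ n → CondL3 hn ⇑L)
    (hl4 : 4 ≤ n → CondL4 hn ⇑L) :
    CondB1 hn (PhiR k hn ⇑L)
      ∧ (4 ≤ n → CondB3 hn (PhiR k hn ⇑L))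
      ∧ (4 ≤ n → CondB4 hn (PhiR k hn ⇑L))
      ∧ CondT1 hn (PhiT k hn ⇑L)
      ∧ CondT2 hn (PhiT k hn ⇑L)
      ∧ CondAA hn (PhiR k hn ⇑L) (PhiT k hn ⇑L) := by
  have hab : p3 hn ≠ p2 hn := by simp only [p3, p2, ne_eq, Fin.mk.injEq]; omega
  have hac : p3 hn ≠ p1 hn := by simp only [p3, p1, ne_eq, Fin.mk.injEq]; omega
  have hbc : p2 hn ≠ p1 hn := by simp only [p2, p1, ne_eq, Fin.mk.injEq]; omega
  -- abbreviations
  set s := Equiv.swap (p3 hn) (p2 hn) with hs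
  set t := Equiv.swap (p2 hn) (p1 hn) with ht
  have hss : s * s = 1 := by rw [hs]; exact Equiv.swap_mul_self _ _
  have htt : t * t = 1 := by rw [ht]; exact Equiv.swap_mul_self _ _
  -- identities among permutations of the last three slots
  have hsts : s * t * s = Equiv.swap (p3 hn) (p1 hn) := by
    rw [hs, ht, swap_sandwich, Equiv.swap_apply_right,
      Equiv.swap_apply_of_ne_of_ne (Ne.symm hac) (Ne.symm hbc)]
  have htut : t * Equiv.swap (p3 hn) (p1 hn) * t = s := by
    rw [hs, ht, swap_sandwich, Equiv.swap_apply_of_ne_of_ne hab hac, Equiv.swap_apply_right,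
      Equiv.swap_comm]
  have htu : t * Equiv.swap (p3 hn) (p1 hn) = s * t := by
    rw [← htut, Equiv.mul_swap_mul_self]
  have hgt : s * t * t = s := Equiv.mul_swap_mul_self _ _ _
  have hg2s : (s * t) * (s * t) * s = t := by
    rw [mul_assoc (s * t) (s * t) s, hsts, mul_assoc, htu, ← mul_assoc, hs,
      Equiv.swap_mul_self, one_mul]
  have hg2t : (s * t) * (s * t) * t = Equiv.swap (p3 hn) (p1 hn) := by
    rw [mul_assoc (s * t) (s * t) t, hgt, hsts]
  refine ⟨?_, ?_, ?_, ?_, ?_, ?_⟩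
  · -- (b1)
    intro x
    simp only [PhiR, ← hs, comp_mul, hss, Equiv.Perm.coe_one, Function.comp_id]
    module
  · -- (b3)
    intro h4 x
    have hda : p4 hn ≠ p3 hn := by simp only [p4, p3, ne_eq, Fin.mk.injEq]; omega
    have hdb : p4 hn ≠ p2 hn := by simp only [p4, p2, ne_eq, Fin.mk.injEq]; omega
    set w := Equiv.swap (p4 hn) (p3 hn) with hw
    have hws : w * s * s = w := Equiv.mul_swap_mul_self _ _ _
    have hwsw : w * s * w = Equiv.swap (p4 hn) (p2 hn) := by
      rw [hw, hs, swap_sandwich, Equiv.swap_apply_right,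
        Equiv.swap_apply_of_ne_of_ne (Ne.symm hdb) (Ne.symm hab)]
    have hsws : s * w * s = Equiv.swap (p4 hn) (p2 hn) := by
      rw [hw, hs, swap_sandwich, Equiv.swap_apply_of_ne_of_ne hda hdb,
        Equiv.swap_apply_left]
    have hg2 : (w * s) * (w * s) = s * w := by
      rw [← mul_assoc, hwsw, ← hsws, Equiv.mul_swap_mul_self]
    have hg2s' : (w * s) * (w * s) * s = Equiv.swap (p4 hn) (p2 hn) := by
      rw [hg2, hsws]
    simp only [PhiR, ← hs, ← hw, comp_mul, hws, hg2, hsws, hg2s']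
    have h2x := hl2 h4 x
    simp only [← hs, ← hw] at h2x
    linear_combination (norm := module) (-(6 : k)⁻¹) • h2x
  · -- (b4)
    intro h4 ω h3' h2' h1' x
    have hcomm : ω * s = s * ω := by
      rw [hs, Equiv.mul_swap_eq_swap_mul, h3', h2']
    simp only [PhiR, ← hs, comp_mul]
    rw [hcomm, ← comp_mul, hl3 h4 ω h3' h2' h1', hl3 h4 ω h3' h2' h1']
  · -- (t1)
    intro x
    simp only [PhiT, ← ht, comp_mul, htt, Equiv.Perm.coe_one, Function.comp_id]
    module
  · -- (t2)
    have key : ∀ ρ : Equiv.Perm (Fin n), ρ (p2 hn) = p2 hn → ρ (p1 hn) = p1 hn →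
        ∀ y : Fin n → M, L (y ∘ ⇑ρ) - L (y ∘ ⇑(ρ * t)) = L y - L (y ∘ ⇑t) := by
      by_cases h4 : 4 ≤ n
      · have hda : p4 hn ≠ p3 hn := by simp only [p4, p3, ne_eq, Fin.mk.injEq]; omega
        have hdb : p4 hn ≠ p2 hn := by simp only [p4, p2, ne_eq, Fin.mk.injEq]; omega
        have hdc : p4 hn ≠ p1 hn := by simp only [p4, p1, ne_eq, Fin.mk.injEq]; omega
        set w := Equiv.swap (p4 hn) (p3 hn) with hw
        have Qfix : ∀ ρ : Equiv.Perm (Fin n), ρ (p3 hn) = p3 hn → ρ (p2 hn) = p2 hn →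
            ρ (p1 hn) = p1 hn →
            ∀ y : Fin n → M, L (y ∘ ⇑ρ) - L (y ∘ ⇑(ρ * t)) = L y - L (y ∘ ⇑t) := by
          intro ρ h3' h2' h1' y
          have hcomm : ρ * t = t * ρ := by
            rw [ht, Equiv.mul_swap_eq_swap_mul, h2', h1']
          rw [hl3 h4 ρ h3' h2' h1' y, hcomm, ← comp_mul, hl3 h4 ρ h3' h2' h1']
        have Qw : ∀ y : Fin n → M, L (y ∘ ⇑w) - L (y ∘ ⇑(w * t)) = L y - L (y ∘ ⇑t) := by
          intro y
          have h := hl4 h4 y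
          linear_combination (norm := abel) -h
        intro ρ h2' h1' y
        by_cases h3' : ρ (p3 hn) = p3 hn
        · exact Qfix ρ h3' h2' h1' y
        · have hj2 : ρ (p3 hn) ≠ p2 hn := fun h => hab (ρ.injective (h.trans h2'.symm))
          have hj1 : ρ (p3 hn) ≠ p1 hn := fun h => hac (ρ.injective (h.trans h1'.symm))
          set σ := Equiv.swap (ρ (p3 hn)) (p4 hn) with hσ
          have hσ3 : σ (p3 hn) = p3 hn := by
            rw [hσ]; exact Equiv.swap_apply_of_ne_of_ne (fun h => h3' h.symm) (Ne.symm hda)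
          have hσ2 : σ (p2 hn) = p2 hn := by
            rw [hσ]; exact Equiv.swap_apply_of_ne_of_ne (Ne.symm hj2) (Ne.symm hdb)
          have hσ1 : σ (p1 hn) = p1 hn := by
            rw [hσ]; exact Equiv.swap_apply_of_ne_of_ne (Ne.symm hj1) (Ne.symm hdc)
          set η := w * σ * ρ with hη
          have hη3 : η (p3 hn) = p3 hn := by
            simp only [hη, Equiv.Perm.mul_apply, hσ, Equiv.swap_apply_left, hw]
          have hη2 : η (p2 hn) = p2 hn := by
            simp only [hη, Equiv.Perm.mul_apply, h2', hσ2, hw,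
              Equiv.swap_apply_of_ne_of_ne (Ne.symm hdb) (Ne.symm hab)]
          have hη1 : η (p1 hn) = p1 hn := by
            simp only [hη, Equiv.Perm.mul_apply, h1', hσ1, hw,
              Equiv.swap_apply_of_ne_of_ne (Ne.symm hdc) (Ne.symm hac)]
          have hdecomp : σ * (w * η) = ρ := by
            rw [hη, mul_assoc w σ ρ, hw, Equiv.swap_mul_self_mul, hσ, Equiv.swap_mul_self_mul]
          have := q_mul (t := t) (Qfix σ hσ3 hσ2 hσ1)
            (q_mul (t := t) Qw (Qfix η hη3 hη2 hη1)) y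
          rwa [hdecomp] at this
      · -- n = 3
        intro ρ h2' h1' y
        have hn3 : n = 3 := by omega
        have hval : ∀ i : Fin n, i = p3 hn ∨ i = p2 hn ∨ i = p1 hn := by
          intro i
          have := i.isLt
          simp only [p3, p2, p1, Fin.ext_iff]
          omega
        have h3' : ρ (p3 hn) = p3 hn := by
          rcases hval (ρ (p3 hn)) with h | h | h
          · exact h
          · exact absurd (ρ.injective (h.trans h2'.symm)) hab
          · exact absurd (ρ.injective (h.trans h1'.symm)) hac
        have hρ1 : ρ = 1 := by
          ext i
          rcases hval i with h | h | h <;> subst h <;>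
            simp only [Equiv.Perm.coe_one, id_eq, h3', h2', h1']
        rw [hρ1]
        simp only [one_mul, Equiv.Perm.coe_one, Function.comp_id]
    intro ω h2' h1' x
    simp only [PhiT, ← ht, comp_mul]
    rw [key ω h2' h1' x]
  · -- (aa)
    intro x
    simp only [PhiR, PhiT, ← hs, ← ht, comp_mul, hsts, hgt, hg2s, hg2t]
    module
end

section
/- Let n ≥ 3, k a field of characteristic zero, Χ and V vector spaces over k. For every multilinear map L : Χ^n → V in F_L one has Ψ(Φ_R(L), Φ_T(L)) = L; that is, for all X_1,…,X_n ∈ Χ: −3Φ_R(L)(X_1,…,X_n) − Φ_R(L)(X_1,…,X_{n−3},X_{n−1},X_n,X_{n−2}) + Φ_R(L)(X_1,…,X_{n−3},X_n,X_{n−2},X_{n−1}) + 2Φ_T(L)(X_1,…,X_n) − 2Φ_T(L)(X_1,…,X_{n−3},X_{n−1},X_n,X_{n−2}) = L(X_1,…,X_n). -/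
/-!
Writing `a = (n-2 n-1)` and `b = (n-1 n)` for the transpositions of the last three slots,
unfolding `Ψ(Φ_R L, Φ_T L)` produces `L` evaluated at the six rearrangements
`1, a, b, ab, ba, aba` of the arguments; all but the identity carry the coefficient `-1/6`,
and the identity carries `5/6 = 1 - 1/6`. Hence `Ψ(Φ_R L, Φ_T L) = L - (1/6) Σ_{ω ∈ S₃} L ∘ ω`,
and the sum vanishes by (l1).
-/

lemma p1_ne_p2 {n : ℕ} (h : 3 ≤ n) : p1 h ≠ p2 h := by
  simp only [p1, p2, ne_eq, Fin.mk.injEq]; omega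

lemma p1_ne_p3 {n : ℕ} (h : 3 ≤ n) : p1 h ≠ p3 h := by
  simp only [p1, p3, ne_eq, Fin.mk.injEq]; omega

lemma swap_p3_p2_mul_swap_p2_p1_mul_swap_p3_p2 {n : ℕ} (h : 3 ≤ n) :
    Equiv.swap (p3 h) (p2 h) * Equiv.swap (p2 h) (p1 h) * Equiv.swap (p3 h) (p2 h)
      = Equiv.swap (p3 h) (p1 h) := by
  rw [Equiv.swap_comm (p3 h) (p2 h), Equiv.swap_comm (p2 h) (p1 h),
    Equiv.swap_mul_swap_mul_swap (p1_ne_p2 h) (p1_ne_p3 h)]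

lemma psi_phiR_phiT_apply {k : Type*} [Field k] {n : ℕ} {M V : Type*} [AddCommGroup V]
    [Module k V] (h : 3 ≤ n) (h6 : (6 : k) ≠ 0) (L : (Fin n → M) → V) (x : Fin n → M) :
    Psi h (PhiR k h L) (PhiT k h L) x
      = L x - (6 : k)⁻¹ •
        (L x + L (x ∘ ⇑(Equiv.swap (p3 h) (p2 h))) + L (x ∘ ⇑(Equiv.swap (p3 h) (p1 h)))
          + L (x ∘ ⇑(Equiv.swap (p2 h) (p1 h)))
          + L (x ∘ ⇑(Equiv.swap (p3 h) (p2 h) * Equiv.swap (p2 h) (p1 h)))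
          + L (x ∘ ⇑(Equiv.swap (p2 h) (p1 h) * Equiv.swap (p3 h) (p2 h)))) := by
  simp only [Psi, PhiR, PhiT, Function.comp_assoc, ← Equiv.Perm.coe_mul, mul_inv_rev,
    Equiv.swap_inv, Equiv.mul_swap_mul_self, swap_p3_p2_mul_swap_p2_p1_mul_swap_p3_p2]
  have h6_inv : (6 : k) * (6 : k)⁻¹ = 1 := mul_inv_cancel₀ h6
  linear_combination (norm := module) h6_inv • L x

theorem statement2_general {k : Type*} [Field k] [CharZero k] {M V : Type*}
    [AddCommGroup M] [Module k M] [AddCommGroup V] [Module k V]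
    {n : ℕ} (hn : 3 ≤ n)
    (L : MultilinearMap k (fun _ : Fin n => M) V)
    (hl1 : CondL1 hn ⇑L) :
    ∀ x : Fin n → M, Psi hn (PhiR k hn ⇑L) (PhiT k hn ⇑L) x = L x := by
  intro x
  rw [psi_phiR_phiT_apply hn (by norm_num) L x, hl1 x, smul_zero, sub_zero]

/-- for every multilinear map `L` in `F_L` one has `Ψ(Φ_R(L), Φ_T(L)) = L`. -/
theorem statement2 {k : Type*} [Field k] [CharZero k] {M V : Type*}
    [AddCommGroup M] [Module k M] [AddCommGroup V] [Module k V]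
    {n : ℕ} (hn : 3 ≤ n)
    (L : MultilinearMap k (fun _ : Fin n => M) V)
    (hl1 : CondL1 hn ⇑L)
    (hl2 : 4 ≤ n → CondL2 hn ⇑L)
    (hl3 : 4 ≤ n → CondL3 hn ⇑L)
    (hl4 : 4 ≤ n → CondL4 hn ⇑L) :
    ∀ x : Fin n → M, Psi hn (PhiR k hn ⇑L) (PhiT k hn ⇑L) x = L x :=
  statement2_general hn L hl1
end

section
/- Let n ≥ 3, k a field of characteristic zero, Χ and V vector spaces over k. For every pair of multilinear maps (R,T) in F_{(R,T)} one has Φ_R(Ψ(R,T)) = R and Φ_T(Ψ(R,T)) = T; that is, with L := Ψ(R,T), for all X_1,…,X_n ∈ Χ: (1/6)[L(X_1,…,X_{n−3},X_{n−1},X_{n−2},X_n) − L(X_1,…,X_n)] = R(X_1,…,X_n) and (1/6)[L(X_1,…,X_n) − L(X_1,…,X_{n−2},X_n,X_{n−1})] = T(X_1,…,X_n). -/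
private lemma comp_perm_comp {n : ℕ} {M : Type*} (x : Fin n → M) (σ τ : Equiv.Perm (Fin n)) :
    (x ∘ ⇑σ) ∘ ⇑τ = x ∘ ⇑(σ * τ) := by
  funext i; simp [Equiv.Perm.mul_apply]

/-- for every pair of multilinear maps `(R,T)` in `F_{(R,T)}` one has
`Φ_R(Ψ(R,T)) = R` and `Φ_T(Ψ(R,T)) = T`. -/
theorem statement3 {k : Type*} [Field k] [CharZero k] {M V : Type*}
    [AddCommGroup M] [Module k M] [AddCommGroup V] [Module k V]
    {n : ℕ} (hn : 3 ≤ n)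
    (R T : MultilinearMap k (fun _ : Fin n => M) V)
    (hb1 : CondB1 hn ⇑R)
    (hb3 : 4 ≤ n → CondB3 hn ⇑R)
    (hb4 : 4 ≤ n → CondB4 hn ⇑R)
    (ht1 : CondT1 hn ⇑T)
    (ht2 : CondT2 hn ⇑T)
    (haa : CondAA hn ⇑R ⇑T) :
    ∀ x : Fin n → M,
      PhiR k hn (Psi hn ⇑R ⇑T) x = R x ∧ PhiT k hn (Psi hn ⇑R ⇑T) x = T x := by
  intro x
  have h21 : p2 hn ≠ p1 hn := by
    simp only [p1, p2, Ne, Fin.mk.injEq]; omega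
  have h32 : p3 hn ≠ p2 hn := by
    simp only [p2, p3, Ne, Fin.mk.injEq]; omega
  have h31 : p3 hn ≠ p1 hn := by
    simp only [p1, p3, Ne, Fin.mk.injEq]; omega
  set a := Equiv.swap (p3 hn) (p2 hn) with ha_def
  set b := Equiv.swap (p2 hn) (p1 hn) with hb_def
  have ha2 : ∀ σ : Equiv.Perm (Fin n), a * (a * σ) = σ := fun σ =>
    Equiv.swap_mul_self_mul _ _ σ
  have hb2 : ∀ σ : Equiv.Perm (Fin n), b * (b * σ) = σ := fun σ =>
    Equiv.swap_mul_self_mul _ _ σ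
  have ha2' : a * a = 1 := Equiv.swap_mul_self _ _
  have hb2' : b * b = 1 := Equiv.swap_mul_self _ _
  have hinv : (a * b)⁻¹ = b * a := by
    rw [mul_inv_rev, ha_def, hb_def, Equiv.swap_inv, Equiv.swap_inv]
  -- the braid relation  b * (a * b) = a * (b * a)
  have hbraid : b * (a * b) = a * (b * a) := by
    rw [ha_def, hb_def, ← mul_assoc, ← mul_assoc,
      Equiv.swap_mul_swap_mul_swap h32 h31,
      show Equiv.swap (p2 hn) (p1 hn) = Equiv.swap (p1 hn) (p2 hn) from Equiv.swap_comm _ _,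
      show Equiv.swap (p3 hn) (p2 hn) = Equiv.swap (p2 hn) (p3 hn) from Equiv.swap_comm _ _,
      Equiv.swap_mul_swap_mul_swap h21.symm h31.symm, Equiv.swap_comm]
  -- elementary reductions
  have hRa : ∀ y : Fin n → M, R (y ∘ ⇑a) = -R y := fun y =>
    eq_neg_of_add_eq_zero_right (hb1 y)
  have hTb : ∀ y : Fin n → M, T (y ∘ ⇑b) = -T y := fun y =>
    eq_neg_of_add_eq_zero_right (ht1 y)
  have hRba : R (x ∘ ⇑(b * a)) = -R (x ∘ ⇑b) := by
    have := hRa (x ∘ ⇑b); rwa [comp_perm_comp] at this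
  have hRaba : R (x ∘ ⇑(a * (b * a))) = -R (x ∘ ⇑(a * b)) := by
    have := hRa (x ∘ ⇑(a * b)); rwa [comp_perm_comp, mul_assoc] at this
  have hTab : T (x ∘ ⇑(a * b)) = -T (x ∘ ⇑a) := by
    have := hTb (x ∘ ⇑a); rwa [comp_perm_comp] at this
  have hTaba : T (x ∘ ⇑(a * (b * a))) = -T (x ∘ ⇑(b * a)) := by
    have := hTb (x ∘ ⇑(b * a)); rwa [comp_perm_comp, mul_assoc, hbraid] at this
  have h6 : (6 : k) ≠ 0 := by norm_num
  constructor
  · simp only [PhiR, Psi, comp_perm_comp]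
    rw [← ha_def, ← hb_def]
    rw [inv_smul_eq_iff₀ h6]
    rw [show (6 : k) • (R x) = ((6 : ℤ) : k) • (R x) by norm_num,
      Int.cast_smul_eq_zsmul]
    rw [hinv, ha2, hRa x, hRba, hRaba, hTab, hTb x]
    abel
  · simp only [PhiT, Psi, comp_perm_comp]
    rw [← ha_def, ← hb_def]
    rw [inv_smul_eq_iff₀ h6]
    rw [show (6 : k) • (T x) = ((6 : ℤ) : k) • (T x) by norm_num,
      Int.cast_smul_eq_zsmul]
    have hsq : (a * b) * (a * b) = b * a := by rw [mul_assoc, hbraid, ha2]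
    rw [hinv, hbraid, hb2, hRa x, hRba, hRaba, hTab, hTb x, hTaba]
    have h := haa x
    rw [← ha_def, ← hb_def, hsq, hRba, hTab] at h
    have h2 := congrArg (fun v => (-2 : ℤ) • v) h
    simp only [smul_zero] at h2
    rw [← sub_eq_zero, ← h2]
    abel
end

section
/- Let G be a group and (B^{p,q})_{p,q∈ℤ} a bicomplex of G-representations over ℝ: each B^{p,q} is a real vector space with a linear G-action that is semisimple as a module over the group algebra ℝ[G], and there are G-equivariant linear maps d_h : B^{p,q} → B^{p+1,q} and d_v : B^{p,q} → B^{p,q+1} with d_h∘d_h = 0, d_v∘d_v = 0, d_h∘d_v + d_v∘d_h = 0. Assume: (i) B^{p,q} = 0 unless 0 ≤ −p ≤ q; (ii) there exists P ≥ 0 with B^{p,q} = 0 whenever p < −P; (iii) for every (p,q) with p + q ≠ 0, ker(d_h : B^{p,q} → B^{p+1,q}) = im(d_h : B^{p−1,q} → B^{p,q}). For r ≥ 0 set Z_h^r := ker(d_h : B^{−r,r} → B^{−r+1,r}). Then there exists a G-equivariant linear map β : ⊕_{r≥0} Z_h^r → ⊕_{r≥0} B^{−r,r} such that for every r ≥ 0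 and every z ∈ Z_h^r, writing c_p ∈ B^{−p,p} for the components of β(z), one has c_r = z, c_p = 0 for all p < r, and d_v(c_p) + d_h(c_{p+1}) = 0 in B^{−p,p+1} for every p ≥ 0 (i.e. β(z) = z + lower order terms in ⊕_{p>r} B^{−p,p} is a cocycle of total degree 0 in the total complex). -/
/-! Starting from a horizontal cocycle `z = c_r ∈ B^{-r,r}`, solve `d_h c_{p+1} = -d_v c_p`
successively for `p ≥ r`. The right-hand side is always a horizontal cocycle (by
anticommutativity and `d_v² = 0`), and it lies off the diagonal `p + q = 0`, so by horizontal
exactness it is a horizontal coboundary. Semisimplicity makes `d_h` split equivariantly on its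
range, so choosing `c_{p+1} = -σ (d_v c_p)` with an equivariant section `σ` makes `z ↦ (c_p)_p`
linear and equivariant. -/

def castB (B : ℤ → ℤ → Type*) {q p p' : ℤ} (x : B p q) (h : p = p') : B p' q := h ▸ x

open LinearMap

section Semisimple

variable {k G M N : Type*} [CommRing k] [Monoid G] [AddCommGroup M] [Module k M]
  [AddCommGroup N] [Module k N]

def HasInvariantComplements (ρ : Representation k G M) : Prop :=
  ∀ W : Submodule k M, (∀ g, ∀ x ∈ W, ρ g x ∈ W) →
    ∃ W' : Submodule k M, (∀ g, ∀ x ∈ W', ρ g x ∈ W') ∧ IsCompl W W'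

lemma HasInvariantComplements.exists_isIntertwiningMap_projection {ρ : Representation k G M}
    (hρ : HasInvariantComplements ρ) (W : Submodule k M) (hW : ∀ g, ∀ x ∈ W, ρ g x ∈ W) :
    ∃ π : M →ₗ[k] M, ρ.IsIntertwiningMap ρ π ∧ (∀ x, π x ∈ W) ∧ ∀ x ∈ W, π x = x := by
  obtain ⟨W', hW', hc⟩ := hρ W hW
  refine ⟨W.projection W' hc, ⟨fun g x => ?_⟩, W.projection_apply_mem hc,
    fun x hx => W.projection_apply_of_mem_left hc hx⟩
  conv_lhs => rw [← W.projection_add_projection_eq_self hc x, map_add, map_add,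
    W.projection_apply_of_mem_left hc (hW g _ (W.projection_apply_mem hc x)),
    W.projection_apply_of_mem_right hc (hW' g _ (W'.projection_apply_mem hc.symm x)), add_zero]

lemma HasInvariantComplements.exists_isIntertwiningMap_rightInverseOn_range
    {ρM : Representation k G M} {ρN : Representation k G N}
    (hM : HasInvariantComplements ρM) (hN : HasInvariantComplements ρN)
    {f : M →ₗ[k] N} (hf : ρM.IsIntertwiningMap ρN f) :
    ∃ s : N →ₗ[k] M, ρN.IsIntertwiningMap ρM s ∧ ∀ y ∈ range f, f (s y) = y := by
  obtain ⟨W, hW, hc⟩ := hM (ker f) fun g x hx => by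
    rw [mem_ker, hf.isIntertwining, mem_ker.1 hx, map_zero]
  obtain ⟨π, hπ, hπ_mem, hπ_id⟩ := hN.exists_isIntertwiningMap_projection (range f) <| by
    rintro g _ ⟨x, rfl⟩
    exact ⟨ρM g x, hf.isIntertwining g x⟩
  have inj : ∀ a ∈ W, ∀ b ∈ W, f a = f b → a = b := fun a ha b hb hab => by
    have : a - b ∈ ker f ⊓ W := ⟨by simp [hab], W.sub_mem ha hb⟩
    rwa [hc.inf_eq_bot, Submodule.mem_bot, sub_eq_zero] at this
  have surj : ∀ y ∈ range f, ∃ w ∈ W, f w = y := by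
    rintro _ ⟨x, rfl⟩
    obtain ⟨a, ha, w, hw, rfl⟩ := Submodule.mem_sup.1 (hc.sup_eq_top ▸ Submodule.mem_top (x := x))
    exact ⟨w, hw, by simp [mem_ker.1 ha]⟩
  let e : W ≃ₗ[k] range f := .ofBijective (f.restrict fun x _ => mem_range_self f x)
    ⟨fun a b hab => Subtype.ext (inj a a.2 b b.2 (congrArg Subtype.val hab)),
      fun y => let ⟨w, hw, hwy⟩ := surj y y.2; ⟨⟨w, hw⟩, Subtype.ext hwy⟩⟩
  let s : N →ₗ[k] M := W.subtype ∘ₗ e.symm.toLinearMap ∘ₗ π.codRestrict (range f) hπ_mem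
  have hs_mem : ∀ y, s y ∈ W := fun y => (e.symm _).2
  have hfs : ∀ y, f (s y) = π y := fun y =>
    congrArg Subtype.val (e.apply_symm_apply (π.codRestrict (range f) hπ_mem y))
  -- equivariance: `s y` is the unique preimage of `π y` in the invariant complement `W` of `ker f`
  refine ⟨s, ⟨fun g y => inj _ (hs_mem _) _ (hW g _ (hs_mem y)) ?_⟩, fun y hy => ?_⟩
  · rw [hfs, hf.isIntertwining, hfs, hπ.isIntertwining]
  · rw [hfs, hπ_id y hy]

end Semisimple

section Zigzag

variable {k : Type*} [CommRing k] {A V : ℕ → Type*} [∀ n, AddCommGroup (A n)]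
  [∀ n, Module k (A n)] [∀ n, AddCommGroup (V n)] [∀ n, Module k (V n)]
  (v : ∀ n, A n →ₗ[k] V n) (σ : ∀ n, V n →ₗ[k] A (n + 1))

def zigzag (r : ℕ) : ∀ p, A r →ₗ[k] A p
  | 0 => if h : r = 0 then (LinearEquiv.cast (M := A) h).toLinearMap else 0
  | p + 1 => if h : r = p + 1 then (LinearEquiv.cast (M := A) h).toLinearMap
      else -(σ p ∘ₗ v p ∘ₗ zigzag r p)

lemma zigzag_of_lt {r p : ℕ} (h : p < r) : zigzag v σ r p = 0 := by
  induction p with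
  | zero => rw [zigzag, dif_neg (by omega)]
  | succ p ih => rw [zigzag, dif_neg (by omega), ih (by omega), comp_zero, comp_zero, neg_zero]

lemma zigzag_self_apply (r : ℕ) (z : A r) : zigzag v σ r r z = z := by
  cases r <;> simp [zigzag]

lemma zigzag_succ_apply {r p : ℕ} (h : r ≤ p) (z : A r) :
    zigzag v σ r (p + 1) z = -σ p (v p (zigzag v σ r p z)) := by
  rw [zigzag, dif_neg (by omega)]
  rfl

variable {G : Type*} [Monoid G] {ρA : ∀ n, Representation k G (A n)}
  {ρV : ∀ n, Representation k G (V n)}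

lemma isIntertwiningMap_zigzag (hv : ∀ n, (ρA n).IsIntertwiningMap (ρV n) (v n))
    (hσ : ∀ n, (ρV n).IsIntertwiningMap (ρA (n + 1)) (σ n)) (r p : ℕ) :
    (ρA r).IsIntertwiningMap (ρA p) (zigzag v σ r p) := by
  refine ⟨fun g z => ?_⟩
  induction p with
  | zero =>
    by_cases h : r = 0
    · subst h; simp [zigzag]
    · simp [zigzag, h]
  | succ p ih =>
    by_cases h : r = p + 1
    · subst h; simp [zigzag]
    · simp [zigzag, h, ih, (hv p).isIntertwining, (hσ p).isIntertwining]

end Zigzag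

section Bicomplex

variable {k : Type*} [CommRing k] {B : ℤ → ℤ → Type*} [∀ p q, AddCommGroup (B p q)]
  [∀ p q, Module k (B p q)] (dh : ∀ p q, B p q →ₗ[k] B (p + 1) q)
  (dv : ∀ p q, B p q →ₗ[k] B p (q + 1))

lemma castB_eq_zero_iff {q p p' : ℤ} (h : p = p') {x : B p q} : castB B x h = 0 ↔ x = 0 := by
  subst h; rfl

lemma castB_dv {q p p' : ℤ} (h : p = p') (x : B p q) :
    castB B (dv p q x) h = dv p' q (castB B x h) := by
  subst h; rfl

lemma castB_neg {q p p' : ℤ} (h : p = p') (x : B p q) : castB B (-x) h = -castB B x h := by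
  subst h; rfl

lemma exists_isIntertwiningMap_cast_dh_rightInverse {G : Type*} [Monoid G]
    {ρ : ∀ p q, Representation k G (B p q)} (hss : ∀ p q, HasInvariantComplements (ρ p q))
    (hdhG : ∀ p q g x, dh p q (ρ p q g x) = ρ (p + 1) q g (dh p q x))
    (hexact : ∀ p q : ℤ, (p + 1) + q ≠ 0 → ∀ x : B (p + 1) q,
      dh (p + 1) q x = 0 → ∃ y : B p q, dh p q y = x)
    {p p' q : ℤ} (e : p + 1 = p') (hpq : p' + q ≠ 0) :
    ∃ σ : B p' q →ₗ[k] B p q, (ρ p' q).IsIntertwiningMap (ρ p q) σ ∧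
      ∀ w, dh p' q w = 0 → castB B (dh p q (σ w)) e = w := by
  subst e
  obtain ⟨σ, hσ, hdhσ⟩ := (hss p q).exists_isIntertwiningMap_rightInverseOn_range (hss (p + 1) q)
    (f := dh p q) ⟨hdhG p q⟩
  exact ⟨σ, hσ, fun w hw => hdhσ w (hexact p q hpq w hw)⟩

lemma dv_add_cast_dh_zigzag_eq_zero (hdv2 : ∀ p q x, dv p (q + 1) (dv p q x) = 0)
    (hanti : ∀ p q x, dh p (q + 1) (dv p q x) + dv (p + 1) q (dh p q x) = 0)
    (σ : ∀ n : ℕ, B (-(n : ℤ)) ((n : ℤ) + 1) →ₗ[k] B (-((n : ℤ) + 1)) ((n : ℤ) + 1))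
    (hσ : ∀ (n : ℕ) w, dh (-(n : ℤ)) ((n : ℤ) + 1) w = 0 →
      castB B (dh (-((n : ℤ) + 1)) ((n : ℤ) + 1) (σ n w)) (by ring) = w)
    {r : ℕ} (z : B (-(r : ℤ)) (r : ℤ)) (hz : dh (-(r : ℤ)) (r : ℤ) z = 0) (p : ℕ) :
    dv (-(p : ℤ)) (p : ℤ) (zigzag (fun n => dv (-(n : ℤ)) (n : ℤ)) σ r p z)
      + castB B (dh (-((p : ℤ) + 1)) ((p : ℤ) + 1)
          (zigzag (fun n => dv (-(n : ℤ)) (n : ℤ)) σ r (p + 1) z)) (by ring) = 0 := by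
  set c := fun p => zigzag (fun n => dv (-(n : ℤ)) (n : ℤ)) σ r p z
  have dh_dv : ∀ p q x, dh p (q + 1) (dv p q x) = -dv (p + 1) q (dh p q x) :=
    fun p q x => eq_neg_of_add_eq_zero_left (hanti p q x)
  have dh_c_of_le : ∀ p ≤ r, dh (-(p : ℤ)) p (c p) = 0 := by
    intro p hp
    rcases hp.lt_or_eq with hlt | rfl
    · simp [c, zigzag_of_lt _ _ hlt]
    · simpa [c, zigzag_self_apply] using hz
  have cast_dh_c_succ : ∀ p, r ≤ p → dv _ _ (dh (-(p : ℤ)) p (c p)) = 0 →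
      castB B (dh (-((p : ℤ) + 1)) ((p : ℤ) + 1) (c (p + 1))) (by ring) = -dv _ _ (c p) := by
    intro p hr hp
    rw [show c (p + 1) = -σ p (dv _ _ (c p)) from
        zigzag_succ_apply (fun n => dv (-(n : ℤ)) (n : ℤ)) σ hr z, map_neg, castB_neg,
      hσ _ _ (by rw [dh_dv, hp, neg_zero])]
  have dv_dh_c : ∀ p : ℕ, dv _ _ (dh (-(p : ℤ)) p (c p)) = 0 := by
    intro p
    induction p with
    | zero => rw [dh_c_of_le 0 (Nat.zero_le r), map_zero]
    | succ m ih =>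
      rcases le_or_gt (m + 1) r with h | h
      · rw [dh_c_of_le _ h, map_zero]
      · show dv (-((m : ℤ) + 1) + 1) ((m : ℤ) + 1) (dh (-((m : ℤ) + 1)) ((m : ℤ) + 1) (c (m + 1)))
          = 0
        rw [← castB_eq_zero_iff (show -((m : ℤ) + 1) + 1 = -(m : ℤ) by ring), castB_dv,
          cast_dh_c_succ m (by omega) ih, map_neg, hdv2, neg_zero]
  rcases lt_or_ge p r with h | h
  · have : dh (-((p : ℤ) + 1)) ((p : ℤ) + 1) (c (p + 1)) = 0 := dh_c_of_le (p + 1) h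
    simp [c, zigzag_of_lt _ _ h, this, castB_eq_zero_iff]
  · rw [cast_dh_c_succ p h (dv_dh_c p), add_neg_cancel]

end Bicomplex

/-- for a bicomplex of semisimple `G`-representations concentrated in the
sector `0 ≤ -p ≤ q`, bounded in the horizontal direction, and whose horizontal cohomology
is concentrated on the diagonal `p + q = 0`, there is a `G`-equivariant linear map `β`
sending each horizontal cocycle `z ∈ Z_h^r = ker(d_h : B^{-r,r} → B^{-r+1,r})` to a total
cocycle of total degree `0` of the form `β(z) = z + l.o.t.`. -/
theorem statement9 (G : Type*) [Group G] (B : ℤ → ℤ → Type*)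
    [∀ p q, AddCommGroup (B p q)] [∀ p q, Module ℝ (B p q)]
    (ρ : ∀ p q, Representation ℝ G (B p q))
    -- semisimplicity: every `G`-invariant subspace has a `G`-invariant complement
    (hss : ∀ p q (W : Submodule ℝ (B p q)), (∀ g, ∀ x ∈ W, ρ p q g x ∈ W) →
      ∃ W' : Submodule ℝ (B p q), (∀ g, ∀ x ∈ W', ρ p q g x ∈ W') ∧ IsCompl W W')
    (dh : ∀ p q, B p q →ₗ[ℝ] B (p + 1) q)
    (dv : ∀ p q, B p q →ₗ[ℝ] B p (q + 1))
    (hdv2 : ∀ p q x, dv p (q + 1) (dv p q x) = 0)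
    (hanti : ∀ p q x, dh p (q + 1) (dv p q x) + dv (p + 1) q (dh p q x) = 0)
    (hdhG : ∀ p q g x, dh p q (ρ p q g x) = ρ (p + 1) q g (dh p q x))
    (hdvG : ∀ p q g x, dv p q (ρ p q g x) = ρ p (q + 1) g (dv p q x))
    -- (iii): horizontal exactness off the diagonal p + q = 0
    (hexact : ∀ p q : ℤ, (p + 1) + q ≠ 0 → ∀ x : B (p + 1) q,
      dh (p + 1) q x = 0 → ∃ y : B p q, dh p q y = x) :
    ∃ β : ∀ r : ℕ, B (-(r : ℤ)) (r : ℤ) →ₗ[ℝ] (∀ p : ℕ, B (-(p : ℤ)) (p : ℤ)),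
      -- `β` is `G`-equivariant on the horizontal cocycles
      (∀ (r : ℕ) (g : G) (z : B (-(r : ℤ)) (r : ℤ)), dh (-(r : ℤ)) (r : ℤ) z = 0 →
        ∀ p : ℕ, β r (ρ (-(r : ℤ)) (r : ℤ) g z) p = ρ (-(p : ℤ)) (p : ℤ) g (β r z p))
      ∧ ∀ (r : ℕ) (z : B (-(r : ℤ)) (r : ℤ)), dh (-(r : ℤ)) (r : ℤ) z = 0 →
          -- leading component `z` ...
          β r z r = z
          -- ... vanishing lower components ...
          ∧ (∀ p : ℕ, p < r → β r z p = 0)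
          -- ... and `β r z` is a total cocycle of total degree 0
          ∧ ∀ p : ℕ,
              dv (-(p : ℤ)) (p : ℤ) (β r z p)
                + castB B (dh (-((p : ℤ) + 1)) ((p : ℤ) + 1) (β r z (p + 1)))
                    (by ring) = 0 := by
  choose σ hσG hσ using fun n : ℕ => exists_isIntertwiningMap_cast_dh_rightInverse dh hss hdhG
    hexact (p := -((n : ℤ) + 1)) (p' := -(n : ℤ)) (q := (n : ℤ) + 1) (by ring) (by omega)
  refine ⟨fun r => LinearMap.pi (zigzag (fun n => dv (-(n : ℤ)) (n : ℤ)) σ r),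
    fun r g z _ p => ?_, fun r z hz =>
      ⟨zigzag_self_apply (fun n => dv (-(n : ℤ)) (n : ℤ)) σ r z, fun p hp => ?_,
        dv_add_cast_dh_zigzag_eq_zero dh dv hdv2 hanti σ hσ z hz⟩⟩
  · exact (isIntertwiningMap_zigzag _ _ (ρA := fun n => ρ (-(n : ℤ)) n)
      (fun n => ⟨hdvG _ _⟩) hσG r p).isIntertwining g z
  · simp [zigzag_of_lt _ _ hp]
end

section
/- (The ideal curvature tensor in order 4.) In the chart model, define the (1,4)-tensor field iR_4 pointwise (suppressing the point p) by iR_4(x_1,x_2,x_3,x_4) := (∇_{x_1}R)(x_2,x_3)(x_4) + (1/2)[R(T(x_1,x_2),x_3)(x_4) + R(x_2,T(x_1,x_3))(x_4)] − (1/2)[T(R(x_2,x_3)(x_1),x_4) + T((∇_{x_1}T)(x_2,x_3),x_4) + T(T(T(x_2,x_3),x_1),x_4)] + (1/4)[−2(∇_{x_1}T)(T(x_2,x_3),x_4) − (∇_{x_2}T)(T(x_1,x_3),x_4) + (∇_{x_3}T)(T(x_1,x_2),x_4)] + (1/8)[T(T(x_3,x_4),T(x_1,x_2)) − T(T(x_2,x_4),T(x_1,x_3))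 + 2T(T(x_2,x_3),T(x_1,x_4))]. Then at every point p ∈ E and for all x_1,…,x_4 ∈ E: (b1) iR_4(x_1,x_2,x_3,x_4) + iR_4(x_1,x_3,x_2,x_4) = 0, and (b3) iR_4(x_1,x_2,x_3,x_4) + iR_4(x_2,x_3,x_1,x_4) + iR_4(x_3,x_1,x_2,x_4) = 0 (the second Bianchi identity in ideal form). -/
noncomputable section

/- Chart model of a linear connection with torsion: `E` is a finite-dimensional real
normed vector space and `Γ : E → (E →L[ℝ] E →L[ℝ] E)` a smooth Christoffel map.  Below:
`Tor` is the torsion, `Curv` the curvature (with the sign convention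
`R(X,Y)Z = ∇_{[X,Y]}Z − [∇_X,∇_Y]Z`), and `covDer2`, `covDer3` the covariant derivatives
of (1,2)- and (1,3)-tensor fields. -/

variable {E : Type*} [NormedAddCommGroup E] [NormedSpace ℝ E] [FiniteDimensional ℝ E]

/-- The torsion `T(p)(u,v) := Γ(p)(u)(v) − Γ(p)(v)(u)`. -/
def Tor (Γ : E → (E →L[ℝ] E →L[ℝ] E)) (p u v : E) : E :=
  Γ p u v - Γ p v u

/-- The curvature
`R(p)(u,v)(w) := −(DΓ)(p)(u)(v)(w) + (DΓ)(p)(v)(u)(w) − Γ(p)(u)(Γ(p)(v)(w)) + Γ(p)(v)(Γ(p)(u)(w))`. -/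
def Curv (Γ : E → (E →L[ℝ] E →L[ℝ] E)) (p u v w : E) : E :=
  -(fderiv ℝ Γ p u v w) + fderiv ℝ Γ p v u w - Γ p u (Γ p v w) + Γ p v (Γ p u w)

/-- The covariant derivative of a (1,2)-tensor field:
`(∇A)(p)(x)(z₁,z₂) := (DA)(p)(x)(z₁,z₂) + Γ(p)(x)(A(p)(z₁,z₂)) − A(p)(Γ(p)(x)(z₁),z₂)
− A(p)(z₁,Γ(p)(x)(z₂))`. -/
def covDer2 (Γ : E → (E →L[ℝ] E →L[ℝ] E)) (A : E → E → E → E) (p x z₁ z₂ : E) : E :=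
  fderiv ℝ (fun q => A q z₁ z₂) p x + Γ p x (A p z₁ z₂)
    - A p (Γ p x z₁) z₂ - A p z₁ (Γ p x z₂)

/-- The covariant derivative of a (1,3)-tensor field. -/
def covDer3 (Γ : E → (E →L[ℝ] E →L[ℝ] E)) (A : E → E → E → E → E) (p x z₁ z₂ z₃ : E) : E :=
  fderiv ℝ (fun q => A q z₁ z₂ z₃) p x + Γ p x (A p z₁ z₂ z₃)
    - A p (Γ p x z₁) z₂ z₃ - A p z₁ (Γ p x z₂) z₃ - A p z₁ z₂ (Γ p x z₃)

/-- The symmetrized Christoffel map `Γ̃(p)(u)(v) := (1/2)(Γ(p)(u)(v) + Γ(p)(v)(u))`. -/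
def symmGamma (Γ : E → (E →L[ℝ] E →L[ℝ] E)) : E → (E →L[ℝ] E →L[ℝ] E) :=
  fun p => (2 : ℝ)⁻¹ • (Γ p + (Γ p).flip)

/-- The ideal curvature tensor in order 4 (the point `p` is the first argument). -/
def iR4 (Γ : E → (E →L[ℝ] E →L[ℝ] E)) (p x₁ x₂ x₃ x₄ : E) : E :=
  covDer3 Γ (Curv Γ) p x₁ x₂ x₃ x₄
    + (2 : ℝ)⁻¹ • (Curv Γ p (Tor Γ p x₁ x₂) x₃ x₄ + Curv Γ p x₂ (Tor Γ p x₁ x₃) x₄)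
    - (2 : ℝ)⁻¹ • (Tor Γ p (Curv Γ p x₂ x₃ x₁) x₄
        + Tor Γ p (covDer2 Γ (Tor Γ) p x₁ x₂ x₃) x₄
        + Tor Γ p (Tor Γ p (Tor Γ p x₂ x₃) x₁) x₄)
    + (4 : ℝ)⁻¹ • (-((2 : ℝ) • covDer2 Γ (Tor Γ) p x₁ (Tor Γ p x₂ x₃) x₄)
        - covDer2 Γ (Tor Γ) p x₂ (Tor Γ p x₁ x₃) x₄
        + covDer2 Γ (Tor Γ) p x₃ (Tor Γ p x₁ x₂) x₄)
    + (8 : ℝ)⁻¹ • (Tor Γ p (Tor Γ p x₃ x₄) (Tor Γ p x₁ x₂)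
        - Tor Γ p (Tor Γ p x₂ x₄) (Tor Γ p x₁ x₃)
        + (2 : ℝ) • Tor Γ p (Tor Γ p x₂ x₃) (Tor Γ p x₁ x₄))

/-! Identity (b1) is formal and needs no smoothness: `T(u,v)`, `R(u,v)`, `(∇ₓT)(u,v)` and
`(∇ₓR)(u,v)` are antisymmetric in `u, v`, so every group of terms of `iR4` is antisymmetric in
`x₂, x₃`, termwise or after exchanging two of its summands.

For (b3), the cyclic sum of the `∇R` and `R(T(·,·),·)` terms is the second Bianchi identity
with torsion, that of the second group is `T(·, x₄)` applied to the first Bianchi identity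
with torsion, and the terms `∇T(T(·,·),x₄)` and `T(T(·,·),T(·,·))` cancel in the cyclic sum.
The Bianchi identities themselves follow by expanding everything in `Γ`, `DΓ` and `D²Γ`; the
second one also uses the symmetry of `D²Γ`. -/

open ContinuousLinearMap

theorem fderiv_clm_apply_const_apply {𝕜 F G H : Type*} [NontriviallyNormedField 𝕜]
    [NormedAddCommGroup F] [NormedSpace 𝕜 F] [NormedAddCommGroup G] [NormedSpace 𝕜 G]
    [NormedAddCommGroup H] [NormedSpace 𝕜 H] {f : F → G →L[𝕜] H} {p : F}
    (hf : DifferentiableAt 𝕜 f p) (u : G) (x : F) :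
    fderiv 𝕜 (fun q => f q u) p x = fderiv 𝕜 f p x u := by
  simp [fderiv_clm_apply hf (differentiableAt_const u)]

section
variable {V : Type*} [NormedAddCommGroup V] [NormedSpace ℝ V] (Γ : V → (V →L[ℝ] V →L[ℝ] V))
  (p : V)

theorem tor_swap (u v : V) : Tor Γ p v u = -Tor Γ p u v :=
  (neg_sub _ _).symm

theorem tor_neg_left (u v : V) : Tor Γ p (-u) v = -Tor Γ p u v := by
  simp only [Tor, map_neg, neg_apply]; abel

theorem tor_neg_right (u v : V) : Tor Γ p u (-v) = -Tor Γ p u v := by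
  simp only [Tor, map_neg, neg_apply]; abel

theorem tor_add_left (u v w : V) : Tor Γ p (u + v) w = Tor Γ p u w + Tor Γ p v w := by
  simp only [Tor, map_add, add_apply]; abel

theorem tor_zero_left (v : V) : Tor Γ p 0 v = 0 := by
  simp [Tor]

theorem curv_swap (u v w : V) : Curv Γ p v u w = -Curv Γ p u v w := by
  simp only [Curv]; abel

theorem curv_neg_right (u v w : V) : Curv Γ p u (-v) w = -Curv Γ p u v w := by
  simp only [Curv, map_neg, neg_apply]; abel

theorem covDer2_swap {A : V → V → V → V} (hA : ∀ q u v, A q v u = -A q u v) (x u v : V) :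
    covDer2 Γ A p x v u = -covDer2 Γ A p x u v := by
  have hfun : (fun q => A q v u) = fun q => -A q u v := funext fun q => hA q u v
  simp only [covDer2, hfun, fderiv_fun_neg, neg_apply, hA p u v, hA p (Γ p x u) v,
    hA p u (Γ p x v), map_neg]
  abel

theorem covDer2_neg_left {A : V → V → V → V} (hA : ∀ q u v, A q (-u) v = -A q u v)
    (x u v : V) : covDer2 Γ A p x (-u) v = -covDer2 Γ A p x u v := by
  simp only [covDer2, fderiv_fun_neg, neg_apply, hA, map_neg]
  abel

theorem covDer3_swap {A : V → V → V → V → V} (hA : ∀ q u v w, A q v u w = -A q u v w)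
    (x u v w : V) : covDer3 Γ A p x v u w = -covDer3 Γ A p x u v w := by
  have hfun : (fun q => A q v u w) = fun q => -A q u v w := funext fun q => hA q u v w
  simp only [covDer3, hfun, fderiv_fun_neg, neg_apply, hA p u v, hA p (Γ p x u) v,
    hA p u (Γ p x v), map_neg]
  abel

theorem iR4_add_iR4_swap (x₁ x₂ x₃ x₄ : V) :
    iR4 Γ p x₁ x₂ x₃ x₄ + iR4 Γ p x₁ x₃ x₂ x₄ = 0 := by
  simp only [iR4, tor_swap Γ p x₂ x₃, curv_swap Γ p (v := x₃), curv_swap Γ p (Tor Γ p x₁ x₃) x₂,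
    covDer3_swap Γ p (fun q => curv_swap Γ q) x₁ x₂ x₃ x₄,
    covDer2_swap Γ p (fun q => tor_swap Γ q) x₁ x₂ x₃, tor_neg_left, covDer2_neg_left Γ p (fun q => tor_neg_left Γ q)]
  module

variable {Γ p}

theorem fderiv_tor_apply (hΓ : DifferentiableAt ℝ Γ p) (u v x : V) :
    fderiv ℝ (fun q => Tor Γ q u v) p x = fderiv ℝ Γ p x u v - fderiv ℝ Γ p x v u := by
  unfold Tor
  rw [fderiv_fun_sub (by fun_prop) (by fun_prop)]
  simp (disch := fun_prop) only [sub_apply, fderiv_clm_apply_const_apply]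

theorem fderiv_curv_apply (hΓ : DifferentiableAt ℝ Γ p)
    (hΓ' : DifferentiableAt ℝ (fderiv ℝ Γ) p) (u v w x : V) :
    fderiv ℝ (fun q => Curv Γ q u v w) p x =
      -fderiv ℝ (fderiv ℝ Γ) p x u v w + fderiv ℝ (fderiv ℝ Γ) p x v u w
        - (fderiv ℝ Γ p x u (Γ p v w) + Γ p u (fderiv ℝ Γ p x v w))
        + (fderiv ℝ Γ p x v (Γ p u w) + Γ p v (fderiv ℝ Γ p x u w)) := by
  unfold Curv
  rw [fderiv_fun_add (by fun_prop) (by fun_prop), fderiv_fun_sub (by fun_prop) (by fun_prop),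
    fderiv_fun_add (by fun_prop) (by fun_prop), fderiv_fun_neg,
    fderiv_clm_apply (c := fun q => Γ q u) (u := fun q => Γ q v w) (by fun_prop) (by fun_prop),
    fderiv_clm_apply (c := fun q => Γ q v) (u := fun q => Γ q u w) (by fun_prop) (by fun_prop)]
  simp (disch := fun_prop) only [add_apply, sub_apply, neg_apply, comp_apply, flip_apply,
    fderiv_clm_apply_const_apply]
  abel

theorem first_bianchi (hΓ : DifferentiableAt ℝ Γ p) (x y z : V) :
    Curv Γ p y z x + covDer2 Γ (Tor Γ) p x y z + Tor Γ p (Tor Γ p y z) x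
      + (Curv Γ p z x y + covDer2 Γ (Tor Γ) p y z x + Tor Γ p (Tor Γ p z x) y)
      + (Curv Γ p x y z + covDer2 Γ (Tor Γ) p z x y + Tor Γ p (Tor Γ p x y) z) = 0 := by
  simp only [covDer2, fderiv_tor_apply hΓ]
  simp only [Curv, Tor, map_sub, sub_apply]
  abel

theorem second_bianchi (hΓ : DifferentiableAt ℝ Γ p) (hΓ' : DifferentiableAt ℝ (fderiv ℝ Γ) p)
    (hsymm : IsSymmSndFDerivAt ℝ Γ p) (x y z w : V) :
    covDer3 Γ (Curv Γ) p x y z w + Curv Γ p (Tor Γ p x y) z w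
      + (covDer3 Γ (Curv Γ) p y z x w + Curv Γ p (Tor Γ p y z) x w)
      + (covDer3 Γ (Curv Γ) p z x y w + Curv Γ p (Tor Γ p z x) y w) = 0 := by
  simp only [covDer3, fderiv_curv_apply hΓ hΓ', hsymm.eq y x, hsymm.eq z y, hsymm.eq x z]
  simp only [Curv, Tor, map_add, map_sub, map_neg, sub_apply]
  abel

theorem iR4_cyclic (hΓ : DifferentiableAt ℝ Γ p) (hΓ' : DifferentiableAt ℝ (fderiv ℝ Γ) p)
    (hsymm : IsSymmSndFDerivAt ℝ Γ p) (x₁ x₂ x₃ x₄ : V) :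
    iR4 Γ p x₁ x₂ x₃ x₄ + iR4 Γ p x₂ x₃ x₁ x₄ + iR4 Γ p x₃ x₁ x₂ x₄ = 0 := by
  have h₁ := congrArg (Tor Γ p · x₄) (first_bianchi hΓ x₁ x₂ x₃)
  simp only [tor_add_left, tor_zero_left] at h₁
  have h₂ := second_bianchi hΓ hΓ' hsymm x₁ x₂ x₃ x₄
  simp only [iR4, tor_swap Γ p x₃ x₁, tor_swap Γ p x₁ x₂, tor_swap Γ p x₂ x₃,
    tor_neg_right, curv_neg_right, curv_swap Γ p (Tor Γ p x₁ x₂) x₃,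
    curv_swap Γ p (Tor Γ p x₂ x₃) x₁, curv_swap Γ p (Tor Γ p x₃ x₁) x₂,
    tor_swap Γ p (Tor Γ p x₁ x₄) (Tor Γ p x₂ x₃), tor_swap Γ p (Tor Γ p x₂ x₄) (Tor Γ p x₃ x₁),
    tor_swap Γ p (Tor Γ p x₃ x₄) (Tor Γ p x₁ x₂), covDer2_neg_left Γ p (fun q => tor_neg_left Γ q)]
  linear_combination (norm := module) h₂ - (2 : ℝ)⁻¹ • h₁

end

/-- the ideal order-4 curvature tensor satisfies
(b1) `iR₄(x₁,x₂,x₃,x₄) + iR₄(x₁,x₃,x₂,x₄) = 0` and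
(b3) `iR₄(x₁,x₂,x₃,x₄) + iR₄(x₂,x₃,x₁,x₄) + iR₄(x₃,x₁,x₂,x₄) = 0`
(the second Bianchi identity in ideal form). -/
theorem statement14 (Γ : E → (E →L[ℝ] E →L[ℝ] E)) (hΓ : ContDiff ℝ (⊤ : ℕ∞) Γ)
    (p x₁ x₂ x₃ x₄ : E) :
    iR4 Γ p x₁ x₂ x₃ x₄ + iR4 Γ p x₁ x₃ x₂ x₄ = 0
    ∧ iR4 Γ p x₁ x₂ x₃ x₄ + iR4 Γ p x₂ x₃ x₁ x₄ + iR4 Γ p x₃ x₁ x₂ x₄ = 0 := by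
  have hΓ₂ : ContDiff ℝ 2 Γ := hΓ.of_le (WithTop.coe_le_coe.2 le_top)
  refine ⟨iR4_add_iR4_swap Γ p x₁ x₂ x₃ x₄, iR4_cyclic ?_ ?_ ?_ x₁ x₂ x₃ x₄⟩
  · exact hΓ₂.differentiable two_ne_zero p
  · exact (hΓ₂.fderiv_right (m := 1) le_rfl).differentiable one_ne_zero p
  · exact hΓ₂.contDiffAt.isSymmSndFDerivAt (by simp)
end
end
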